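/- arXiv:1704.00281 — 8 statements merged into one kernel-verified Lean document; each statement's English description precedes it below -/
import Mathlib

section
/- Effective intermediate value theorem with explicit grid witness: Let a < b be real numbers, f : ℝ → ℝ, and let g : ℕ → ℕ be a modulus of uniform continuity for f on [a,b]. Assume f(a) < 0 < f(b). Then for every k ≥ 1 and every N ≥ 1 with (b−a)/N < 1/(g k), writing x_j := a + j·(b−a)/N, the set {j : ℕ | j ≤ N ∧ f(x_j) ≤ 0} is nonempty (it contains 0); moreover its greatest element j₀ satisfies j₀ < N and |f(x_{j₀})| < 1/k. -/
/-- Effective intermediate value theorem `IVT_ef` with explicit grid witness: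
given a modulus of uniform continuity `g` for `f` on `[a,b]`, with `f a < 0 < f b`,
for every `k ≥ 1` and mesh fine enough, the set of grid indices `j ≤ N` with
`f (x_j) ≤ 0` contains `0`, and its greatest element `j₀` satisfies `j₀ < N` and
`|f (x_{j₀})| < 1/k`, where `x_j = a + j·(b−a)/N`. -/
theorem effective_IVT (a b : ℝ) (hab : a < b) (f : ℝ → ℝ) (g : ℕ → ℕ)
    (hg1 : ∀ k : ℕ, 1 ≤ k → 1 ≤ g k)
    (hg : ∀ k : ℕ, 1 ≤ k → ∀ x ∈ Set.Icc a b, ∀ y ∈ Set.Icc a b,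
      |x - y| < 1 / (g k : ℝ) → |f x - f y| < 1 / (k : ℝ))
    (ha : f a < 0) (hb : 0 < f b)
    (k N : ℕ) (hk : 1 ≤ k) (hN : 1 ≤ N)
    (hmesh : (b - a) / (N : ℝ) < 1 / (g k : ℝ)) :
    (0 ∈ {j : ℕ | j ≤ N ∧ f (a + (j : ℝ) * ((b - a) / (N : ℝ))) ≤ 0}) ∧
    ∃ j₀ : ℕ, IsGreatest {j : ℕ | j ≤ N ∧ f (a + (j : ℝ) * ((b - a) / (N : ℝ))) ≤ 0} j₀ ∧
      j₀ < N ∧ |f (a + (j₀ : ℝ) * ((b - a) / (N : ℝ)))| < 1 / (k : ℝ) := by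
  classical
  set x : ℕ → ℝ := fun j => a + (j : ℝ) * ((b - a) / (N : ℝ)) with hx
  have hNpos : (0 : ℝ) < N := by exact_mod_cast hN
  have hstep : (0 : ℝ) < (b - a) / N := div_pos (by linarith) hNpos
  have hmem : ∀ j : ℕ, j ≤ N → x j ∈ Set.Icc a b := by
    intro j hj
    have hjN : (j : ℝ) ≤ N := by exact_mod_cast hj
    have h1 : (0:ℝ) ≤ (j : ℝ) * ((b - a) / N) :=
      mul_nonneg (Nat.cast_nonneg j) hstep.le
    have h2 : (j : ℝ) * ((b - a) / N) ≤ (N : ℝ) * ((b - a) / N) :=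
      mul_le_mul_of_nonneg_right hjN hstep.le
    have hNb : (N : ℝ) * ((b - a) / N) = b - a := by field_simp
    constructor
    · simp only [hx]; linarith
    · simp only [hx]; rw [hNb] at h2; linarith
  have hx0 : x 0 = a := by simp [hx]
  have hxN : x N = b := by
    have h : (N : ℝ) * ((b - a) / N) = b - a := by field_simp
    simp only [hx, h]; ring
  have hP0 : f (x 0) ≤ 0 := by rw [hx0]; linarith
  have h0 : 0 ∈ {j : ℕ | j ≤ N ∧ f (x j) ≤ 0} := ⟨Nat.zero_le _, hP0⟩
  refine ⟨h0, ?_⟩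
  set P : ℕ → Prop := fun j => f (x j) ≤ 0 with hP
  set j₀ := Nat.findGreatest P N with hj₀
  have hj₀le : j₀ ≤ N := Nat.findGreatest_le N
  have hPj₀ : P j₀ := by
    rcases Nat.eq_zero_or_pos j₀ with h | h
    · rw [h]; exact hP0
    · exact Nat.findGreatest_of_ne_zero rfl h.ne'
  have hgreat : IsGreatest {j : ℕ | j ≤ N ∧ f (x j) ≤ 0} j₀ := by
    refine ⟨⟨hj₀le, hPj₀⟩, ?_⟩
    rintro j ⟨hjN, hfj⟩
    exact Nat.le_findGreatest hjN hfj
  have hj₀N : j₀ < N := by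
    rcases lt_or_eq_of_le hj₀le with h | h
    · exact h
    · exfalso
      have : f (x N) ≤ 0 := h ▸ hPj₀
      rw [hxN] at this; linarith
  refine ⟨j₀, hgreat, hj₀N, ?_⟩
  have hnot : ¬ P (j₀ + 1) :=
    Nat.findGreatest_is_greatest (Nat.lt_succ_self _) hj₀N
  have hfpos : 0 < f (x (j₀ + 1)) := lt_of_not_ge hnot
  have hdist : |x (j₀ + 1) - x j₀| < 1 / (g k : ℝ) := by
    have : x (j₀ + 1) - x j₀ = (b - a) / N := by
      simp only [hx]; push_cast; ring
    rw [this, abs_of_pos hstep]; exact hmesh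
  have hkey := hg k hk (x (j₀ + 1)) (hmem _ hj₀N) (x j₀) (hmem _ hj₀le) hdist
  have := abs_lt.mp hkey
  have habs : |f (x j₀)| = -f (x j₀) := abs_of_nonpos hPj₀
  rw [habs]
  linarith [this.1, this.2]
end

section
/- Effective approximate extreme value theorem: Let X be a nonempty metric space, let x : ℕ → X be a sequence and h : ℕ → ℕ a modulus of total boundedness for X with respect to x, let f : X → ℝ, and let g : ℕ → ℕ be a modulus of uniform continuity for f on X (with respect to the metric). Then for every k ≥ 1 there exists m ≤ h(g k) such that for every p ∈ X, f(p) ≤ f(x m) + 1/k. -/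
/-- Effective approximate extreme value theorem `WMX_ef`: given a modulus of total
boundedness `h` (with net `x`) for the metric space `X` and a modulus of uniform
continuity `g` for `f : X → ℝ`, for every `k ≥ 1` there is `m ≤ h (g k)` such that
`f p ≤ f (x m) + 1/k` for all `p ∈ X`. -/
theorem effective_EVT {X : Type*} [MetricSpace X] [Nonempty X]
    (x : ℕ → X) (h : ℕ → ℕ)
    (htb : ∀ k : ℕ, 1 ≤ k → ∀ p : X, ∃ n ≤ h k, dist (x n) p < 1 / (k : ℝ))
    (f : X → ℝ) (g : ℕ → ℕ)
    (hg1 : ∀ k : ℕ, 1 ≤ k → 1 ≤ g k)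
    (hg : ∀ k : ℕ, 1 ≤ k → ∀ p q : X, dist p q < 1 / (g k : ℝ) → |f p - f q| < 1 / (k : ℝ)) :
    ∀ k : ℕ, 1 ≤ k → ∃ m ≤ h (g k), ∀ p : X, f p ≤ f (x m) + 1 / (k : ℝ) := by
  intro k hk
  obtain ⟨m, hm, hmax⟩ := (Finset.range (h (g k) + 1)).exists_max_image (fun n => f (x n))
    ⟨0, Finset.mem_range.mpr (Nat.succ_pos _)⟩
  refine ⟨m, Nat.lt_succ_iff.mp (Finset.mem_range.mp hm), fun p => ?_⟩
  obtain ⟨n, hn, hd⟩ := htb (g k) (hg1 k hk) p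
  have habs := hg k hk (x n) p hd
  have h1 : f p - f (x n) < 1 / (k : ℝ) := by
    have := abs_lt.mp habs
    linarith [this.1, this.2, abs_nonneg (f (x n) - f p)]
  have h2 : f (x n) ≤ f (x m) := hmax n (Finset.mem_range.mpr (Nat.lt_succ_of_le hn))
  linarith
end

section
/- Net maxima approximate the supremum of a uniformly continuous function: Let X be a nonempty metric space, let x : ℕ → X be a sequence and h : ℕ → ℕ a modulus of total boundedness for X with respect to x, let f : X → ℝ, and let g : ℕ → ℕ be a modulus of uniform continuity for f on X. Then the range of f is bounded above, and for every k ≥ 1, writing M_k := max over n ≤ h(g k) of f(x n), one has sSup (Set.range f) − 1/k ≤ M_k ≤ sSup (Set.range f). -/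
/-! Every point `p` lies within `1 / g k` of some net point `x n` with `n ≤ h (g k)`, so
`f p < f (x n) + 1 / k ≤ M_k + 1 / k`. Hence `M_k + 1 / k` bounds `f` above, and `M_k`, being a
maximum of values of `f`, is at most `sSup (range f)`. -/

open Set

section FiniteNet

variable {ι X : Type*} {f : X → ℝ} {x : ι → X} {s : Finset ι} {ε : ℝ}

theorem le_sup'_add_of_forall_exists (hs : s.Nonempty)
    (hnet : ∀ p, ∃ i ∈ s, f p ≤ f (x i) + ε) (p : X) :
    f p ≤ s.sup' hs (fun i => f (x i)) + ε := by
  obtain ⟨i, hi, hp⟩ := hnet p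
  linarith [s.le_sup' (fun i => f (x i)) hi]

theorem bddAbove_range_of_forall_exists (hs : s.Nonempty)
    (hnet : ∀ p, ∃ i ∈ s, f p ≤ f (x i) + ε) : BddAbove (range f) :=
  ⟨_, forall_mem_range.2 (le_sup'_add_of_forall_exists hs hnet)⟩

theorem sSup_range_sub_le_sup' (hs : s.Nonempty)
    (hnet : ∀ p, ∃ i ∈ s, f p ≤ f (x i) + ε) :
    sSup (range f) - ε ≤ s.sup' hs (fun i => f (x i)) := by
  obtain ⟨i, -⟩ := id hs
  have hle : sSup (range f) ≤ s.sup' hs (fun i => f (x i)) + ε :=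
    csSup_le (range_nonempty_iff_nonempty.2 ⟨x i⟩)
      (forall_mem_range.2 (le_sup'_add_of_forall_exists hs hnet))
  linarith

theorem sup'_le_sSup_range (hs : s.Nonempty) (hf : BddAbove (range f)) :
    s.sup' hs (fun i => f (x i)) ≤ sSup (range f) :=
  Finset.sup'_le hs _ fun i _ => le_csSup hf (mem_range_self (x i))

end FiniteNet

theorem exists_mem_range_le_add_of_moduli {X : Type*} [PseudoMetricSpace X]
    {x : ℕ → X} {h : ℕ → ℕ} {f : X → ℝ} {g : ℕ → ℕ}
    (htb : ∀ k : ℕ, 1 ≤ k → ∀ p : X, ∃ n ≤ h k, dist (x n) p < 1 / (k : ℝ))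
    (hg1 : ∀ k : ℕ, 1 ≤ k → 1 ≤ g k)
    (hg : ∀ k : ℕ, 1 ≤ k → ∀ p q : X, dist p q < 1 / (g k : ℝ) → |f p - f q| < 1 / (k : ℝ))
    {k : ℕ} (hk : 1 ≤ k) (p : X) :
    ∃ n ∈ Finset.range (h (g k) + 1), f p ≤ f (x n) + 1 / (k : ℝ) := by
  obtain ⟨n, hn, hdist⟩ := htb (g k) (hg1 k hk) p
  refine ⟨n, Finset.mem_range_succ_iff.2 hn, ?_⟩
  linarith [(abs_lt.1 (hg k hk (x n) p hdist)).1]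

theorem net_max_approximates_sSup_general {X : Type*} [MetricSpace X]
    (x : ℕ → X) (h : ℕ → ℕ)
    (htb : ∀ k : ℕ, 1 ≤ k → ∀ p : X, ∃ n ≤ h k, dist (x n) p < 1 / (k : ℝ))
    (f : X → ℝ) (g : ℕ → ℕ)
    (hg1 : ∀ k : ℕ, 1 ≤ k → 1 ≤ g k)
    (hg : ∀ k : ℕ, 1 ≤ k → ∀ p q : X, dist p q < 1 / (g k : ℝ) → |f p - f q| < 1 / (k : ℝ)) :
    BddAbove (Set.range f) ∧
    ∀ k : ℕ, 1 ≤ k →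
      sSup (Set.range f) - 1 / (k : ℝ) ≤
        (Finset.range (h (g k) + 1)).sup' Finset.nonempty_range_add_one (fun n => f (x n)) ∧
      (Finset.range (h (g k) + 1)).sup' Finset.nonempty_range_add_one (fun n => f (x n)) ≤
        sSup (Set.range f) := by
  have hnet := fun k (hk : 1 ≤ k) => exists_mem_range_le_add_of_moduli htb hg1 hg (f := f) hk
  have hbdd := bddAbove_range_of_forall_exists Finset.nonempty_range_add_one (hnet 1 le_rfl)
  exact ⟨hbdd, fun k hk => ⟨sSup_range_sub_le_sup' _ (hnet k hk), sup'_le_sSup_range _ hbdd⟩⟩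

/-- Net maxima approximate the supremum of a uniformly continuous function: given a
modulus of total boundedness `h` (with net `x`) for the metric space `X` and a
modulus of uniform continuity `g` for `f : X → ℝ`, the range of `f` is bounded above
and the maximum `M_k` of `f (x n)` over `n ≤ h (g k)` satisfies
`sSup (range f) − 1/k ≤ M_k ≤ sSup (range f)` for all `k ≥ 1`. -/
theorem net_max_approximates_sSup {X : Type*} [MetricSpace X] [Nonempty X]
    (x : ℕ → X) (h : ℕ → ℕ)
    (htb : ∀ k : ℕ, 1 ≤ k → ∀ p : X, ∃ n ≤ h k, dist (x n) p < 1 / (k : ℝ))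
    (f : X → ℝ) (g : ℕ → ℕ)
    (hg1 : ∀ k : ℕ, 1 ≤ k → 1 ≤ g k)
    (hg : ∀ k : ℕ, 1 ≤ k → ∀ p q : X, dist p q < 1 / (g k : ℝ) → |f p - f q| < 1 / (k : ℝ)) :
    BddAbove (Set.range f) ∧
    ∀ k : ℕ, 1 ≤ k →
      sSup (Set.range f) - 1 / (k : ℝ) ≤
        (Finset.range (h (g k) + 1)).sup' Finset.nonempty_range_add_one (fun n => f (x n)) ∧
      (Finset.range (h (g k) + 1)).sup' Finset.nonempty_range_add_one (fun n => f (x n)) ≤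
        sSup (Set.range f) :=
  net_max_approximates_sSup_general x h htb f g hg1 hg
end

section
/- Effective supremum for totally bounded subsets of ℝ with net contained in the set: Let X ⊆ ℝ be nonempty, let x : ℕ → ℝ be a sequence with x n ∈ X for all n, and let g : ℕ → ℕ be such that for every k ≥ 1 and every y ∈ X there is n ≤ g k with |x n − y| < 1/k. Then X is bounded above and for every k ≥ 1, writing M_k := max over n ≤ g k of x n, one has sSup X − 1/k ≤ M_k ≤ sSup X. -/
open Finset

section NetBound

variable {α ι : Type*} [AddCommGroup α] [LinearOrder α] [IsOrderedAddMonoid α]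

theorem Finset.subset_Iio_sup'_add_of_forall_exists_abs_sub_lt {X : Set α} {s : Finset ι}
    (hs : s.Nonempty) {f : ι → α} {ε : α} (hnet : ∀ y ∈ X, ∃ i ∈ s, |f i - y| < ε) :
    X ⊆ Set.Iio (s.sup' hs f + ε) := by
  intro y hy
  obtain ⟨i, hi, hclose⟩ := hnet y hy
  have hy_lt : y < f i + ε := sub_lt_iff_lt_add'.1 (abs_sub_lt_iff.1 hclose).2
  exact hy_lt.trans_le (add_le_add (le_sup' f hi) le_rfl)

end NetBound

theorem totallyBounded_effective_sSup_general (X : Set ℝ)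
    (x : ℕ → ℝ) (hx : ∀ n, x n ∈ X) (g : ℕ → ℕ)
    (htb : ∀ k : ℕ, 1 ≤ k → ∀ y ∈ X, ∃ n ≤ g k, |x n - y| < 1 / (k : ℝ)) :
    BddAbove X ∧
    ∀ k : ℕ, 1 ≤ k →
      sSup X - 1 / (k : ℝ) ≤ (Finset.range (g k + 1)).sup' Finset.nonempty_range_add_one x ∧
      (Finset.range (g k + 1)).sup' Finset.nonempty_range_add_one x ≤ sSup X := by
  have hcover : ∀ k, 1 ≤ k → X ⊆
      Set.Iio ((range (g k + 1)).sup' nonempty_range_add_one x + 1 / (k : ℝ)) := by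
    refine fun k hk => subset_Iio_sup'_add_of_forall_exists_abs_sub_lt _ fun y hy => ?_
    obtain ⟨n, hn, hclose⟩ := htb k hk y hy
    exact ⟨n, mem_range_succ_iff.2 hn, hclose⟩
  have hbdd : BddAbove X := bddAbove_Iio.mono (hcover 1 le_rfl)
  refine ⟨hbdd, fun k hk => ⟨?_, ?_⟩⟩
  · exact sub_le_iff_le_add.2 (csSup_le ⟨x 0, hx 0⟩ fun y hy => (hcover k hk hy).le)
  · exact sup'_le _ _ fun n _ => le_csSup hbdd (hx n)

/-- Effective supremum for totally bounded `X ⊆ ℝ` whose net lies in `X`: `X` is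
bounded above and, for `k ≥ 1`, the maximum `M_k` of `x n` over `n ≤ g k` satisfies
`sSup X − 1/k ≤ M_k ≤ sSup X`. -/
theorem totallyBounded_effective_sSup (X : Set ℝ) (hX : X.Nonempty)
    (x : ℕ → ℝ) (hx : ∀ n, x n ∈ X) (g : ℕ → ℕ)
    (htb : ∀ k : ℕ, 1 ≤ k → ∀ y ∈ X, ∃ n ≤ g k, |x n - y| < 1 / (k : ℝ)) :
    BddAbove X ∧
    ∀ k : ℕ, 1 ≤ k →
      sSup X - 1 / (k : ℝ) ≤ (Finset.range (g k + 1)).sup' Finset.nonempty_range_add_one x ∧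
      (Finset.range (g k + 1)).sup' Finset.nonempty_range_add_one x ≤ sSup X :=
  totallyBounded_effective_sSup_general X x hx g htb
end

section
/- Existence of a special fan functional: There exists a function Θ : ((ℕ → Bool) → ℕ) → (List (ℕ → Bool) × ℕ) such that for every g : (ℕ → Bool) → ℕ and every tree T ⊆ List Bool the following holds: if for every α in the list (Θ g).1 the initial segment ᾱ(g α) is not in T, then for every β : ℕ → Bool there exists i ≤ (Θ g).2 such that β̄ i is not in T. -/
/-- The initial segment `[α 0, α 1, …, α (n−1)]` of `α : ℕ → Bool`. -/
def initSeg (α : ℕ → Bool) (n : ℕ) : List Bool := (List.range n).map α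

/-- Key compactness lemma: for each `g` there is a finite list of points whose
`g`-cylinders cover Cantor space, together with a bound. -/
lemma exists_finite_cover (g : (ℕ → Bool) → ℕ) :
    ∃ p : List (ℕ → Bool) × ℕ,
      ∀ β : ℕ → Bool, ∃ α ∈ p.1, initSeg β (g α) = initSeg α (g α) ∧ g α ≤ p.2 := by
  have hopen : ∀ α : ℕ → Bool,
      IsOpen {β : ℕ → Bool | ∀ i < g α, β i = α i} := by
    intro α
    have : {β : ℕ → Bool | ∀ i < g α, β i = α i}
        = ⋂ i ∈ Finset.range (g α), {β : ℕ → Bool | β i = α i} := by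
      ext β; simp [Set.mem_iInter]
    rw [this]
    refine isOpen_biInter_finset fun i _ => ?_
    show IsOpen ((fun β : ℕ → Bool => β i) ⁻¹' {α i})
    exact (continuous_apply i).isOpen_preimage _ (isOpen_discrete _)
  have hcover : (Set.univ : Set (ℕ → Bool)) ⊆
      ⋃ α : ℕ → Bool, {β : ℕ → Bool | ∀ i < g α, β i = α i} := by
    intro β _
    exact Set.mem_iUnion.2 ⟨β, fun i _ => rfl⟩
  obtain ⟨s, hs⟩ := isCompact_univ.elim_finite_subcover _ hopen hcover
  refine ⟨⟨s.toList, s.sup g⟩, fun β => ?_⟩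
  obtain ⟨α, hαs, hβ⟩ := Set.mem_iUnion₂.1 (hs (Set.mem_univ β))
  refine ⟨α, Finset.mem_toList.2 hαs, ?_, Finset.le_sup hαs⟩
  simp only [initSeg, List.map_inj_left, List.mem_range]
  exact fun i hi => hβ i hi

/-- Existence of a special fan functional `Θ` with `SCF(Θ)`: for every
`g : (ℕ → Bool) → ℕ` and every prefix-closed tree `T` of finite boolean sequences,
if no `α` in the list `(Θ g).1` has its initial segment of length `g α` in `T`,
then every branch `β` leaves `T` by level `(Θ g).2`. -/
theorem exists_special_fan_functional :
    ∃ Θ : ((ℕ → Bool) → ℕ) → (List (ℕ → Bool) × ℕ),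
      ∀ g : (ℕ → Bool) → ℕ, ∀ T : Set (List Bool),
        (∀ s ∈ T, ∀ t : List Bool, t <+: s → t ∈ T) →
        (∀ α ∈ (Θ g).1, initSeg α (g α) ∉ T) →
        ∀ β : ℕ → Bool, ∃ i ≤ (Θ g).2, initSeg β i ∉ T := by
  choose Θ hΘ using fun g => exists_finite_cover g
  refine ⟨Θ, fun g T _ hnot β => ?_⟩
  obtain ⟨α, hα, heq, hle⟩ := hΘ g β
  exact ⟨g α, hle, heq ▸ hnot α hα⟩
end

section
/- The special fan functional from the intuitionistic fan functional: Let Ω : ((ℕ → Bool) → ℕ) → ℕ satisfy MUC(Ω), i.e. for every Y : (ℕ → Bool) → ℕ and all f, g : ℕ → Bool, if f i = g i for all i < Ω Y then Y f = Y g. Then there exists Θ : ((ℕ → Bool) → ℕ) → (List (ℕ → Bool) × ℕ) such that for every g : (ℕ → Bool) → ℕ and every tree T ⊆ List Bool: if for every α in the list (Θ g).1 the initial segment ᾱ(g α) is not in T, then for every β : ℕ → Bool there exists i ≤ (Θ g).2 such that β̄ i is not in T. -/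
/-- Encode the first `n` values of `β` as a natural number (bit `i` is `β i`). -/
def encBits : (ℕ → Bool) → ℕ → ℕ
  | _, 0 => 0
  | β, n+1 => Nat.bit (β 0) (encBits (fun i => β (i+1)) n)

lemma encBits_lt (β : ℕ → Bool) (n : ℕ) : encBits β n < 2 ^ n := by
  induction n generalizing β with
  | zero => simp [encBits]
  | succ n ih =>
    have h := ih (fun i => β (i+1))
    have : Nat.bit (β 0) (encBits (fun i => β (i+1)) n) ≤
        2 * encBits (fun i => β (i+1)) n + 1 := by
      unfold Nat.bit; cases β 0 <;> simp <;> omega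
    calc encBits β (n+1) ≤ 2 * encBits (fun i => β (i+1)) n + 1 := this
      _ < 2 ^ (n+1) := by rw [pow_succ]; omega

lemma encBits_testBit (β : ℕ → Bool) (n : ℕ) :
    ∀ i < n, (encBits β n).testBit i = β i := by
  induction n generalizing β with
  | zero => intro i hi; omega
  | succ n ih =>
    intro i hi
    cases i with
    | zero => simpa [encBits] using Nat.testBit_bit_zero (β 0) _
    | succ i =>
      have := ih (fun j => β (j+1)) i (by omega)
      simpa [encBits, Nat.testBit_bit_succ] using this

lemma initSeg_eq_of_agree (α β : ℕ → Bool) (n m : ℕ) (h : ∀ i < n, α i = β i)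
    (hm : m ≤ n) : initSeg α m = initSeg β m := by
  unfold initSeg
  apply List.map_congr_left
  intro i hi
  exact h i (lt_of_lt_of_le (List.mem_range.mp hi) hm)

/-- The special fan functional from the intuitionistic fan functional: if `Ω`
satisfies `MUC(Ω)` — i.e. `Ω Y` is a uniform modulus of continuity on Cantor space
for every `Y : (ℕ → Bool) → ℕ` — then there is a special fan functional `Θ`
satisfying `SCF(Θ)`. -/
theorem special_fan_functional_of_MUC (Ω : ((ℕ → Bool) → ℕ) → ℕ)
    (hΩ : ∀ Y : (ℕ → Bool) → ℕ, ∀ f g : ℕ → Bool,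
      (∀ i < Ω Y, f i = g i) → Y f = Y g) :
    ∃ Θ : ((ℕ → Bool) → ℕ) → (List (ℕ → Bool) × ℕ),
      ∀ g : (ℕ → Bool) → ℕ, ∀ T : Set (List Bool),
        (∀ s ∈ T, ∀ t : List Bool, t <+: s → t ∈ T) →
        (∀ α ∈ (Θ g).1, initSeg α (g α) ∉ T) →
        ∀ β : ℕ → Bool, ∃ i ≤ (Θ g).2, initSeg β i ∉ T := by
  classical
  -- `F k` is the sequence whose `i`-th bit is bit `i` of `k`.
  set F : ℕ → ℕ → Bool := fun k i => k.testBit i with hF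
  -- `K g` bounds both the modulus `Ω g` and all values of `g` on Cantor space.
  set K : ((ℕ → Bool) → ℕ) → ℕ :=
    fun g => max (Ω g) ((Finset.range (2 ^ Ω g)).sup fun k => g (F k)) with hK
  refine ⟨fun g => ((List.range (2 ^ K g)).map F, K g), ?_⟩
  intro g T _ hΘ β
  set N := Ω g with hN
  have hNK : N ≤ K g := le_max_left _ _
  -- the element of the list matching β on the first K g bits
  set k := encBits β (K g) with hk
  have hkmem : F k ∈ (List.range (2 ^ K g)).map F :=
    List.mem_map.mpr ⟨k, List.mem_range.mpr (encBits_lt β (K g)), rfl⟩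
  have hagree : ∀ i < K g, F k i = β i := fun i hi => encBits_testBit β (K g) i hi
  -- g (F k) equals g on the short code, hence is ≤ K g
  set k' := encBits β N with hk'
  have hagree' : ∀ i < N, F k' i = β i := fun i hi => encBits_testBit β N i hi
  have hgeq : g (F k) = g (F k') := by
    apply hΩ g
    intro i hi
    rw [hagree i (lt_of_lt_of_le hi hNK), hagree' i hi]
  have hle : g (F k) ≤ K g := by
    rw [hgeq]
    exact le_trans
      (Finset.le_sup (f := fun k => g (F k))
        (Finset.mem_range.mpr (encBits_lt β N))) (le_max_right _ _)
  refine ⟨g (F k), hle, ?_⟩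
  have := hΘ (F k) hkmem
  rwa [initSeg_eq_of_agree (F k) β (K g) (g (F k)) hagree hle] at this
end

section
/- Failure of a uniform modulus of differentiability for the family exp(1/(x²+a)): For each a ∈ (0,1] the function f_a : ℝ → ℝ, f_a(x) := Real.exp (1/(x² + a)), is differentiable at 0. Nevertheless, there is no function N : ℕ → ℕ with N k ≥ 1 for all k ≥ 1 such that for all a ∈ (0,1], all k ≥ 1 and all nonzero reals ε, ε′ with |ε| < 1/(N k) and |ε′| < 1/(N k): |(f_a(ε) − f_a(0))/ε − (f_a(ε′) − f_a(0))/ε′| < 1/k. Indeed, for every δ > 0 there exists a ∈ (0,1] with √a < δ and |(f_a(√a) − f_a(0))/√a − (f_a(−√a) − f_a(0))/(−√a)| ≥ 1. -/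
lemma key_quot (a : ℝ) (ha : a ∈ Set.Ioc (0:ℝ) 1) :
    1 ≤ |(Real.exp (1 / (Real.sqrt a ^ 2 + a)) -
              Real.exp (1 / ((0 : ℝ) ^ 2 + a))) / Real.sqrt a -
            (Real.exp (1 / ((-Real.sqrt a) ^ 2 + a)) -
              Real.exp (1 / ((0 : ℝ) ^ 2 + a))) / (-Real.sqrt a)| := by
  obtain ⟨ha0, ha1⟩ := ha
  set s := Real.sqrt a with hs
  have hs0 : 0 < s := Real.sqrt_pos.mpr ha0
  have hsq : s ^ 2 = a := Real.sq_sqrt ha0.le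
  have hnsq : (-s) ^ 2 = a := by rw [neg_pow]; simp [hsq]
  have h0 : (0:ℝ) ^ 2 + a = a := by ring
  set E2 := Real.exp (1 / (2 * a)) with hE2
  have hE1 : Real.exp (1 / a) = E2 * E2 := by
    rw [hE2, ← Real.exp_add]
    congr 1
    field_simp
    ring
  have hE2ge : 3/2 ≤ E2 := by
    have h1 : 1/2 ≤ 1 / (2*a) := by
      rw [div_le_div_iff₀ (by norm_num) (by linarith)]
      linarith
    have := Real.add_one_le_exp (1 / (2*a))
    rw [← hE2] at this
    linarith
  have hv : (Real.exp (1 / (s ^ 2 + a)) - Real.exp (1 / ((0 : ℝ) ^ 2 + a))) / s -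
      (Real.exp (1 / ((-s) ^ 2 + a)) - Real.exp (1 / ((0 : ℝ) ^ 2 + a))) / (-s)
      = 2 * (E2 - E2 * E2) / s := by
    have h2 : a + a = 2 * a := by ring
    rw [hsq, hnsq, h0, h2, ← hE2, hE1]
    rw [div_neg, sub_neg_eq_add]
    ring
  rw [hv]
  refine le_abs.mpr (Or.inr ?_)
  have hrw : -(2 * (E2 - E2 * E2) / s) = 2 * (E2 * E2 - E2) / s := by ring
  rw [hrw, le_div_iff₀ hs0, one_mul]
  have hs1 : s ≤ 1 := Real.sqrt_le_one.mpr ha1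
  nlinarith [hE2ge, hs1]



/-- Failure of a uniform modulus of differentiability for the family
`f_a x = exp (1/(x² + a))`, `a ∈ (0,1]`: each `f_a` is differentiable at `0`, yet
no modulus `N : ℕ → ℕ` for the difference quotients at `0` works uniformly in `a`;
indeed for every `δ > 0` there is `a ∈ (0,1]` with `√a < δ` whose symmetric
difference quotients at `±√a` differ by at least `1`. -/
theorem no_uniform_modulus_of_differentiability :
    (∀ a ∈ Set.Ioc (0 : ℝ) 1,
      DifferentiableAt ℝ (fun x : ℝ => Real.exp (1 / (x ^ 2 + a))) 0) ∧
    (¬ ∃ N : ℕ → ℕ, (∀ k : ℕ, 1 ≤ k → 1 ≤ N k) ∧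
      ∀ a ∈ Set.Ioc (0 : ℝ) 1, ∀ k : ℕ, 1 ≤ k → ∀ ε ε' : ℝ, ε ≠ 0 → ε' ≠ 0 →
        |ε| < 1 / (N k : ℝ) → |ε'| < 1 / (N k : ℝ) →
        |(Real.exp (1 / (ε ^ 2 + a)) - Real.exp (1 / ((0 : ℝ) ^ 2 + a))) / ε -
          (Real.exp (1 / (ε' ^ 2 + a)) - Real.exp (1 / ((0 : ℝ) ^ 2 + a))) / ε'| <
          1 / (k : ℝ)) ∧
    (∀ δ > (0 : ℝ), ∃ a ∈ Set.Ioc (0 : ℝ) 1, Real.sqrt a < δ ∧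
      1 ≤ |(Real.exp (1 / (Real.sqrt a ^ 2 + a)) -
              Real.exp (1 / ((0 : ℝ) ^ 2 + a))) / Real.sqrt a -
            (Real.exp (1 / ((-Real.sqrt a) ^ 2 + a)) -
              Real.exp (1 / ((0 : ℝ) ^ 2 + a))) / (-Real.sqrt a)|) := by
  have part3 : ∀ δ > (0 : ℝ), ∃ a ∈ Set.Ioc (0 : ℝ) 1, Real.sqrt a < δ ∧
      1 ≤ |(Real.exp (1 / (Real.sqrt a ^ 2 + a)) -
              Real.exp (1 / ((0 : ℝ) ^ 2 + a))) / Real.sqrt a -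
            (Real.exp (1 / ((-Real.sqrt a) ^ 2 + a)) -
              Real.exp (1 / ((0 : ℝ) ^ 2 + a))) / (-Real.sqrt a)| := by
    intro δ hδ
    refine ⟨min 1 (δ ^ 2 / 2), ⟨lt_min one_pos (by positivity), min_le_left _ _⟩, ?_, ?_⟩
    · calc Real.sqrt (min 1 (δ ^ 2 / 2)) ≤ Real.sqrt (δ ^ 2 / 2) :=
            Real.sqrt_le_sqrt (min_le_right _ _)
        _ < Real.sqrt (δ ^ 2) := by
            apply Real.sqrt_lt_sqrt (by positivity)
            nlinarith
        _ = δ := by rw [Real.sqrt_sq hδ.le]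
    · exact key_quot _ ⟨lt_min one_pos (by positivity), min_le_left _ _⟩
  refine ⟨?_, ?_, part3⟩
  · intro a ha
    have h : (0:ℝ) ^ 2 + a ≠ 0 := by nlinarith [ha.1]
    exact (((differentiableAt_const 1).div ((differentiableAt_pow 2).add_const a) h)).exp
  · rintro ⟨N, hN1, hmod⟩
    have hNpos : (0:ℝ) < 1 / (N 1 : ℝ) := by
      have := hN1 1 le_rfl
      positivity
    obtain ⟨a, ha, hsδ, hge⟩ := part3 _ hNpos
    have hs0 : 0 < Real.sqrt a := Real.sqrt_pos.mpr ha.1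
    have habs : |Real.sqrt a| = Real.sqrt a := abs_of_pos hs0
    have := hmod a ha 1 le_rfl (Real.sqrt a) (-Real.sqrt a) hs0.ne'
      (neg_ne_zero.mpr hs0.ne') (by rwa [habs]) (by rwa [abs_neg, habs])
    rw [Nat.cast_one] at this
    linarith
end

section
/- Failure of a uniform modulus of Riemann integrability for the family exp(1/(x²+a)): For each a ∈ (0,1] the function f_a : ℝ → ℝ, f_a(x) := Real.exp (1/(x² + a)), restricted to [0,1], is continuous, hence for each a and each k ≥ 1 there exists N such that any two tagged partitions of [0,1] with mesh < 1/N have Riemann sums of f_a within 1/k of each other. Nevertheless, there is no single function N : ℕ → ℕ with N k ≥ 1 for all k ≥ 1 such that for all a ∈ (0,1] and all k ≥ 1, any two tagged partitions π, ρ of [0,1] with mesh less than 1/(N k) satisfy |S_π(f_a) − S_ρ(f_a)| < 1/k. -/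
/-- A tagged partition of `[0,1]`: points `0 = p 0 < p 1 < ⋯ < p M = 1` together
with tags `t i ∈ [p i, p (i+1)]` for `i < M`. -/
structure TaggedPartitionUnit where
  M : ℕ
  p : ℕ → ℝ
  t : ℕ → ℝ
  M_pos : 0 < M
  first : p 0 = 0
  last : p M = 1
  mono : ∀ i < M, p i < p (i + 1)
  tag_mem : ∀ i < M, t i ∈ Set.Icc (p i) (p (i + 1))

/-- The mesh of a tagged partition: the largest distance between adjacent points. -/
noncomputable def TaggedPartitionUnit.mesh (π : TaggedPartitionUnit) : ℝ :=
  (Finset.range π.M).sup' (Finset.nonempty_range_iff.mpr π.M_pos.ne')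
    (fun i => π.p (i + 1) - π.p i)

/-- The Riemann sum of `f` over a tagged partition. -/
noncomputable def TaggedPartitionUnit.riemannSum (π : TaggedPartitionUnit) (f : ℝ → ℝ) : ℝ :=
  ∑ i ∈ Finset.range π.M, f (π.t i) * (π.p (i + 1) - π.p i)

/-!
Each `f_a` is uniformly continuous on `[0,1]`, so every Riemann sum of small mesh is close to
the integral, which gives a modulus for each fixed `a`. No modulus is uniform in `a`: on the
uniform partition into `m` pieces, moving the first tag from `0` to `1/m` changes the Riemann
sum by `(f_a 0 - f_a (1/m)) / m`. Here `f_a (1/m) ≤ exp (m²)` whatever `a` is, while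
`f_a 0 = exp (1/a)`, and `1/a = m² + m` already makes the change exceed `1`.
-/

open Set

lemma abs_mul_sub_integral_le {f : ℝ → ℝ} {a b t ε : ℝ} (hab : a ≤ b)
    (hf : IntervalIntegrable f MeasureTheory.volume a b)
    (hε : ∀ x ∈ Icc a b, |f t - f x| ≤ ε) :
    |f t * (b - a) - ∫ x in a..b, f x| ≤ ε * (b - a) := by
  have hconst : f t * (b - a) = ∫ _ in a..b, f t := by
    rw [intervalIntegral.integral_const, smul_eq_mul, mul_comm]
  rw [hconst, ← intervalIntegral.integral_sub intervalIntegrable_const hf,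
    ← abs_of_nonneg (sub_nonneg.2 hab)]
  refine intervalIntegral.norm_integral_le_of_norm_le_const fun x hx =>
    (Real.norm_eq_abs _).trans_le (hε x ?_)
  rw [uIoc_of_le hab] at hx
  exact Ioc_subset_Icc_self hx

namespace TaggedPartitionUnit

variable (π : TaggedPartitionUnit)

lemma strictMonoOn_p : StrictMonoOn π.p (Iic π.M) :=
  strictMonoOn_Iic_of_lt_succ π.mono

lemma p_mem_Icc {i : ℕ} (hi : i ≤ π.M) : π.p i ∈ Icc (0 : ℝ) 1 := by
  rw [← π.first, ← π.last]
  exact ⟨π.strictMonoOn_p.monotoneOn (mem_Iic.2 (Nat.zero_le _)) hi (Nat.zero_le i),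
    π.strictMonoOn_p.monotoneOn hi (mem_Iic.2 le_rfl) hi⟩

lemma Icc_p_subset {i : ℕ} (hi : i < π.M) : Icc (π.p i) (π.p (i + 1)) ⊆ Icc 0 1 :=
  Icc_subset_Icc (π.p_mem_Icc hi.le).1 (π.p_mem_Icc hi).2

lemma sub_le_mesh {i : ℕ} (hi : i < π.M) : π.p (i + 1) - π.p i ≤ π.mesh :=
  Finset.le_sup' (fun j => π.p (j + 1) - π.p j) (Finset.mem_range.mpr hi)

lemma sum_p_succ_sub_p : ∑ i ∈ Finset.range π.M, (π.p (i + 1) - π.p i) = 1 := by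
  rw [Finset.sum_range_sub, π.first, π.last, sub_zero]

variable {f : ℝ → ℝ} {ε δ : ℝ}

lemma abs_riemannSum_sub_integral_le (hf : ContinuousOn f (Icc 0 1))
    (hfδ : ∀ x ∈ Icc (0 : ℝ) 1, ∀ y ∈ Icc (0 : ℝ) 1, dist x y < δ →
      dist (f x) (f y) < ε)
    (hπ : π.mesh < δ) :
    |π.riemannSum f - ∫ x in (0 : ℝ)..1, f x| ≤ ε := by
  have hint (i : ℕ) (hi : i < π.M) :
      IntervalIntegrable f MeasureTheory.volume (π.p i) (π.p (i + 1)) :=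
    (hf.mono (uIcc_of_le (π.mono i hi).le ▸ π.Icc_p_subset hi)).intervalIntegrable
  have hsplit : ∫ x in (0 : ℝ)..1, f x =
      ∑ i ∈ Finset.range π.M, ∫ x in (π.p i)..(π.p (i + 1)), f x := by
    rw [intervalIntegral.sum_integral_adjacent_intervals hint, π.first, π.last]
  have hterm : ∀ i ∈ Finset.range π.M,
      |f (π.t i) * (π.p (i + 1) - π.p i) - ∫ x in (π.p i)..(π.p (i + 1)), f x| ≤
        ε * (π.p (i + 1) - π.p i) := by
    intro i hi
    rw [Finset.mem_range] at hi
    refine abs_mul_sub_integral_le (π.mono i hi).le (hint i hi) fun x hx => ?_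
    have ht := π.tag_mem i hi
    have hdist : dist (π.t i) x < δ := by
      refine lt_of_le_of_lt ?_ ((π.sub_le_mesh hi).trans_lt hπ)
      rw [Real.dist_eq, abs_sub_le_iff]
      constructor <;> linarith [ht.1, ht.2, hx.1, hx.2]
    exact (hfδ _ (π.Icc_p_subset hi ht) x (π.Icc_p_subset hi hx) hdist).le
  calc |π.riemannSum f - ∫ x in (0 : ℝ)..1, f x|
      = |∑ i ∈ Finset.range π.M,
          (f (π.t i) * (π.p (i + 1) - π.p i) - ∫ x in (π.p i)..(π.p (i + 1)), f x)| := by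
        rw [riemannSum, hsplit, Finset.sum_sub_distrib]
    _ ≤ ∑ i ∈ Finset.range π.M,
          |f (π.t i) * (π.p (i + 1) - π.p i) - ∫ x in (π.p i)..(π.p (i + 1)), f x| :=
        Finset.abs_sum_le_sum_abs _ _
    _ ≤ ∑ i ∈ Finset.range π.M, ε * (π.p (i + 1) - π.p i) := Finset.sum_le_sum hterm
    _ = ε := by rw [← Finset.mul_sum, π.sum_p_succ_sub_p, mul_one]

lemma exists_abs_riemannSum_sub_lt (hf : ContinuousOn f (Icc 0 1)) (hε : 0 < ε) :
    ∃ N : ℕ, 1 ≤ N ∧ ∀ π ρ : TaggedPartitionUnit, π.mesh < 1 / (N : ℝ) →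
      ρ.mesh < 1 / (N : ℝ) → |π.riemannSum f - ρ.riemannSum f| < ε := by
  obtain ⟨δ, hδ, hfδ⟩ := Metric.uniformContinuousOn_iff.1
    (isCompact_Icc.uniformContinuousOn_of_continuous hf) (ε / 3) (by positivity)
  obtain ⟨n, hn⟩ := exists_nat_one_div_lt hδ
  refine ⟨n + 1, by omega, fun π ρ hπ hρ => ?_⟩
  push_cast at hπ hρ
  have hπI := abs_le.1 (π.abs_riemannSum_sub_integral_le hf hfδ (hπ.trans hn))
  have hρI := abs_le.1 (ρ.abs_riemannSum_sub_integral_le hf hfδ (hρ.trans hn))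
  rw [abs_sub_lt_iff]
  constructor <;> linarith [hπI.1, hπI.2, hρI.1, hρI.2]

section Uniform

noncomputable def uniform (m : ℕ) (hm : 0 < m) (t : ℕ → ℝ)
    (ht : ∀ i < m, t i ∈ Icc ((i : ℝ) / m) ((i + 1) / m)) : TaggedPartitionUnit where
  M := m
  p i := i / m
  t := t
  M_pos := hm
  first := by simp
  last := div_self (by positivity)
  mono i _ := by push_cast; gcongr; linarith
  tag_mem i hi := by push_cast; exact ht i hi

variable {m : ℕ} {hm : 0 < m} {t t' : ℕ → ℝ}
  {ht : ∀ i < m, t i ∈ Icc ((i : ℝ) / m) ((i + 1) / m)}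
  {ht' : ∀ i < m, t' i ∈ Icc ((i : ℝ) / m) ((i + 1) / m)}

lemma mesh_uniform : (uniform m hm t ht).mesh = 1 / m := by
  have hstep (i : ℕ) : ((i + 1 : ℕ) : ℝ) / m - i / m = 1 / m := by push_cast; ring
  simp only [mesh, uniform, hstep]
  exact Finset.sup'_const _ _

lemma riemannSum_uniform_sub_riemannSum_uniform (f : ℝ → ℝ) (htt' : ∀ i ≠ 0, t i = t' i) :
    (uniform m hm t ht).riemannSum f - (uniform m hm t' ht').riemannSum f =
      (f (t 0) - f (t' 0)) / m := by
  simp only [riemannSum, uniform]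
  rw [← Finset.sum_sub_distrib, Finset.sum_eq_single_of_mem 0 (Finset.mem_range.2 hm)]
  · push_cast
    ring
  · intro i _ hi
    rw [htt' i hi, sub_self]

lemma exists_riemannSum_sub_eq (f : ℝ → ℝ) (hm : 0 < m) :
    ∃ π ρ : TaggedPartitionUnit, π.mesh = 1 / m ∧ ρ.mesh = 1 / m ∧
      π.riemannSum f - ρ.riemannSum f = (f 0 - f (1 / m)) / m := by
  have hleft (i : ℕ) (_ : i < m) : (i : ℝ) / m ∈ Icc ((i : ℝ) / m) ((i + 1) / m) :=
    ⟨le_rfl, by gcongr; linarith⟩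
  have hshift (i : ℕ) (hi : i < m) :
      Function.update (fun i : ℕ => (i : ℝ) / m) 0 (1 / m) i ∈
        Icc ((i : ℝ) / m) ((i + 1) / m) := by
    rcases eq_or_ne i 0 with rfl | h
    · simp
    · simpa [h] using hleft i hi
  refine ⟨uniform m hm _ hleft, uniform m hm _ hshift, mesh_uniform, mesh_uniform, ?_⟩
  rw [riemannSum_uniform_sub_riemannSum_uniform f fun i hi => (Function.update_of_ne hi _ _).symm]
  simp

end Uniform

end TaggedPartitionUnit

lemma continuous_exp_one_div_sq_add {a : ℝ} (ha : 0 < a) :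
    Continuous fun x : ℝ => Real.exp (1 / (x ^ 2 + a)) :=
  Real.continuous_exp.comp <| continuous_const.div (by fun_prop) fun x =>
    (add_pos_of_nonneg_of_pos (sq_nonneg x) ha).ne'

lemma exists_lt_exp_one_div_sub_exp_one_div_sq_add {m : ℝ} (hm : 1 ≤ m) :
    ∃ a ∈ Ioc (0 : ℝ) 1, m < Real.exp (1 / a) - Real.exp (1 / ((1 / m) ^ 2 + a)) := by
  refine ⟨1 / (m ^ 2 + m), ⟨by positivity, ?_⟩, ?_⟩
  · rw [div_le_one (by positivity)]
    nlinarith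
  have hpeak : 1 / ((1 / m) ^ 2 + 1 / (m ^ 2 + m)) ≤ m ^ 2 :=
    (one_div_le_one_div_of_le (by positivity) (le_add_of_nonneg_right (by positivity))).trans_eq
      (by rw [one_div_pow, one_div_one_div])
  calc m < Real.exp m - 1 := by linarith [Real.add_one_lt_exp (show m ≠ 0 by positivity)]
    _ ≤ Real.exp (m ^ 2) * (Real.exp m - 1) :=
        le_mul_of_one_le_left (by linarith [Real.one_le_exp (show 0 ≤ m by positivity)])
          (Real.one_le_exp (sq_nonneg m))
    _ = Real.exp (1 / (1 / (m ^ 2 + m))) - Real.exp (m ^ 2) := by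
        rw [one_div_one_div, Real.exp_add]; ring
    _ ≤ Real.exp (1 / (1 / (m ^ 2 + m))) - Real.exp (1 / ((1 / m) ^ 2 + 1 / (m ^ 2 + m))) := by
        gcongr

/-- Failure of a uniform modulus of Riemann integrability for the family
`f_a x = exp (1/(x² + a))`, `a ∈ (0,1]`: each `f_a` is continuous on `[0,1]`,
hence for each `a` and `k ≥ 1` there is `N` such that any two tagged partitions
of mesh `< 1/N` have Riemann sums within `1/k`; yet no single `N : ℕ → ℕ` works
uniformly in the parameter `a`. -/
theorem no_uniform_modulus_of_Riemann_integrability :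
    (∀ a ∈ Set.Ioc (0 : ℝ) 1,
      ContinuousOn (fun x : ℝ => Real.exp (1 / (x ^ 2 + a))) (Set.Icc 0 1)) ∧
    (∀ a ∈ Set.Ioc (0 : ℝ) 1, ∀ k : ℕ, 1 ≤ k → ∃ N : ℕ, 1 ≤ N ∧
      ∀ π ρ : TaggedPartitionUnit, π.mesh < 1 / (N : ℝ) → ρ.mesh < 1 / (N : ℝ) →
        |π.riemannSum (fun x : ℝ => Real.exp (1 / (x ^ 2 + a))) -
          ρ.riemannSum (fun x : ℝ => Real.exp (1 / (x ^ 2 + a)))| < 1 / (k : ℝ)) ∧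
    (¬ ∃ N : ℕ → ℕ, (∀ k : ℕ, 1 ≤ k → 1 ≤ N k) ∧
      ∀ a ∈ Set.Ioc (0 : ℝ) 1, ∀ k : ℕ, 1 ≤ k →
        ∀ π ρ : TaggedPartitionUnit,
          π.mesh < 1 / (N k : ℝ) → ρ.mesh < 1 / (N k : ℝ) →
          |π.riemannSum (fun x : ℝ => Real.exp (1 / (x ^ 2 + a))) -
            ρ.riemannSum (fun x : ℝ => Real.exp (1 / (x ^ 2 + a)))| < 1 / (k : ℝ)) := by
  have hcont (a : ℝ) (ha : a ∈ Ioc (0 : ℝ) 1) :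
      ContinuousOn (fun x : ℝ => Real.exp (1 / (x ^ 2 + a))) (Icc 0 1) :=
    (continuous_exp_one_div_sq_add ha.1).continuousOn
  refine ⟨hcont, fun a ha k hk =>
    TaggedPartitionUnit.exists_abs_riemannSum_sub_lt (hcont a ha) (by positivity), ?_⟩
  rintro ⟨N, hN1, hN⟩
  set m := N 1 + 1
  have hm : (1 : ℝ) ≤ m := by simp [m]
  obtain ⟨a, ha, hsteep⟩ := exists_lt_exp_one_div_sub_exp_one_div_sq_add hm
  obtain ⟨π, ρ, hπ, hρ, hgap⟩ := TaggedPartitionUnit.exists_riemannSum_sub_eq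
    (fun x : ℝ => Real.exp (1 / (x ^ 2 + a))) (show 0 < m by omega)
  have hmesh : 1 / (m : ℝ) < 1 / (N 1 : ℝ) := by
    have hN1pos : (1 : ℝ) ≤ N 1 := by exact_mod_cast hN1 1 le_rfl
    gcongr
    simp [m]
  have hsmall := hN a ha 1 le_rfl π ρ (hπ ▸ hmesh) (hρ ▸ hmesh)
  rw [hgap, Nat.cast_one, div_one, abs_lt, div_lt_one (by positivity)] at hsmall
  rw [zero_pow two_ne_zero, zero_add] at hsmall
  exact hsteep.not_gt hsmall.2
end
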